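/- arXiv:1912.11193 — 3 statements merged into one kernel-verified Lean document; each statement's English description precedes it below -/
import Mathlib

section
/- If R_PN = E_{x_p ~ p_+}[E_{x_n ~ p_-}[l(f(x_p), f(x_n))]], R_PU = E_{x_p ~ p_+}[E_{x_u ~ p_u}[l(f(x_p), f(x_u))]], and R_NU = E_{x_u ~ p_u}[E_{x_n ~ p_-}[l(f(x_u), f(x_n))]], where p_u = π p_+ + (1-π) p_- for π ∈ (0,1) and l is the zero-one ranking loss l(u,v) = (1 - sign(u-v))/2, and f is injective on the support (no ties), then R_PN = R_PU + R_NU - 1/2. -/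
/-!
Because `sign 0 = 0`, a tie costs `1/2`, so `l(u,v) + l(v,u) = 1` for all `u, v`. Swapping the
two coordinates of `μ ⊗ μ` then shows that the risk of ranking a distribution against itself is
`1/2`. The risk is affine in each of the two distributions, so
`R_PU = π/2 + (1-π) R_PN` and `R_NU = π R_PN + (1-π)/2`, whose sum is `R_PN + 1/2`.
-/

open MeasureTheory

/-- The zero-one ranking loss `l₀₁(u,v) = (1 - sign(u - v))/2`. -/
noncomputable def l01 (u v : ℝ) : ℝ := (1 - Real.sign (u - v)) / 2

lemma Real.sign_mono : Monotone Real.sign := by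
  intro a b hab
  rcases lt_trichotomy a 0 with ha | rfl | ha
  · rw [Real.sign_of_neg ha]
    rcases Real.sign_apply_eq b with h | h | h <;> rw [h] <;> norm_num
  · rcases hab.lt_or_eq with hb | rfl
    · rw [Real.sign_zero, Real.sign_of_pos hb]; norm_num
    · exact le_rfl
  · rw [Real.sign_of_pos ha, Real.sign_of_pos (ha.trans_le hab)]

lemma l01_add_l01_swap (u v : ℝ) : l01 u v + l01 v u = 1 := by
  rw [l01, l01, ← neg_sub u v, Real.sign_neg]
  ring

lemma norm_l01_le_one (u v : ℝ) : ‖l01 u v‖ ≤ 1 := by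
  rw [l01]
  rcases Real.sign_apply_eq (u - v) with h | h | h <;> rw [h] <;> norm_num

lemma integral_ofReal_smul_add_ofReal_smul {α : Type*} [MeasurableSpace α] {g : α → ℝ}
    {μ ν : Measure α} (hμ : Integrable g μ) (hν : Integrable g ν) {a b : ℝ} (ha : 0 ≤ a)
    (hb : 0 ≤ b) :
    ∫ x, g x ∂(ENNReal.ofReal a • μ + ENNReal.ofReal b • ν) = a * ∫ x, g x ∂μ + b * ∫ x, g x ∂ν := by
  rw [integral_add_measure (hμ.smul_measure ENNReal.ofReal_ne_top)
      (hν.smul_measure ENNReal.ofReal_ne_top),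
    integral_smul_measure, integral_smul_measure, ENNReal.toReal_ofReal ha,
    ENNReal.toReal_ofReal hb, smul_eq_mul, smul_eq_mul]

section Product

variable {α β : Type*} [MeasurableSpace α] [MeasurableSpace β] {g : α × β → ℝ} {a b : ℝ}

lemma integral_prod_mixture_right (μ : Measure α) {ν ν' : Measure β} [SFinite μ] [SFinite ν]
    [SFinite ν'] (hν : Integrable g (μ.prod ν)) (hν' : Integrable g (μ.prod ν')) (ha : 0 ≤ a)
    (hb : 0 ≤ b) :
    ∫ z, g z ∂μ.prod (ENNReal.ofReal a • ν + ENNReal.ofReal b • ν') =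
      a * ∫ z, g z ∂μ.prod ν + b * ∫ z, g z ∂μ.prod ν' := by
  rw [Measure.prod_add, Measure.prod_smul_right, Measure.prod_smul_right,
    integral_ofReal_smul_add_ofReal_smul hν hν' ha hb]

lemma integral_prod_mixture_left {μ μ' : Measure α} (ν : Measure β) [SFinite μ] [SFinite μ']
    [SFinite ν] (hμ : Integrable g (μ.prod ν)) (hμ' : Integrable g (μ'.prod ν)) (ha : 0 ≤ a)
    (hb : 0 ≤ b) :
    ∫ z, g z ∂(ENNReal.ofReal a • μ + ENNReal.ofReal b • μ').prod ν =
      a * ∫ z, g z ∂μ.prod ν + b * ∫ z, g z ∂μ'.prod ν := by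
  rw [Measure.add_prod, Measure.prod_smul_left, Measure.prod_smul_left,
    integral_ofReal_smul_add_ofReal_smul hμ hμ' ha hb]

end Product

lemma integral_prod_self_eq_half_of_add_swap {α : Type*} [MeasurableSpace α] {g : α × α → ℝ}
    (μ : Measure α) [IsProbabilityMeasure μ] (hg : Integrable g (μ.prod μ))
    (hswap : ∀ z, g z + g z.swap = 1) :
    ∫ z, g z ∂μ.prod μ = 1 / 2 := by
  have hg_swap : Integrable (fun z => g z.swap) (μ.prod μ) := hg.swap
  have hsum : ∫ z, g z ∂μ.prod μ + ∫ z, g z.swap ∂μ.prod μ = 1 := by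
    rw [← integral_add hg hg_swap]
    simp [hswap]
  rw [integral_prod_swap g] at hsum
  linarith

section RankingRisk

variable {α : Type*} [MeasurableSpace α] {f : α → ℝ}

lemma integrable_l01_comp (hf : Measurable f) (μ ν : Measure α) [IsFiniteMeasure μ]
    [IsFiniteMeasure ν] : Integrable (fun z : α × α => l01 (f z.1) (f z.2)) (μ.prod ν) := by
  have hmeas : Measurable fun z : α × α => l01 (f z.1) (f z.2) :=
    ((measurable_const.sub (Real.sign_mono.measurable.comp
      ((hf.comp measurable_fst).sub (hf.comp measurable_snd)))).div_const 2)
  exact .of_bound hmeas.aestronglyMeasurable 1 (.of_forall fun z => norm_l01_le_one _ _)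

lemma integral_l01_prod_self (hf : Measurable f) (μ : Measure α) [IsProbabilityMeasure μ] :
    ∫ z, l01 (f z.1) (f z.2) ∂μ.prod μ = 1 / 2 :=
  integral_prod_self_eq_half_of_add_swap μ (integrable_l01_comp hf μ μ)
    fun _ => l01_add_l01_swap _ _

end RankingRisk

theorem pn_pu_nu_decomposition_general {d : ℕ}
    (pPos pNeg : Measure (Fin d → ℝ))
    [IsProbabilityMeasure pPos] [IsProbabilityMeasure pNeg]
    (π : ℝ) (hπ : π ∈ Set.Ioo (0 : ℝ) 1)
    (f : (Fin d → ℝ) → ℝ) (hf : Measurable f)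
    (pU : Measure (Fin d → ℝ))
    (hpU : pU = ENNReal.ofReal π • pPos + ENNReal.ofReal (1 - π) • pNeg) :
    ∫ z, l01 (f z.1) (f z.2) ∂(pPos.prod pNeg) =
      (∫ z, l01 (f z.1) (f z.2) ∂(pPos.prod pU)) +
      (∫ z, l01 (f z.1) (f z.2) ∂(pU.prod pNeg)) - 1 / 2 := by
  have hπ₀ : 0 ≤ π := hπ.1.le
  have hπ₁ : 0 ≤ 1 - π := sub_nonneg.mpr hπ.2.le
  subst hpU
  rw [integral_prod_mixture_right pPos (integrable_l01_comp hf _ _) (integrable_l01_comp hf _ _)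
      hπ₀ hπ₁,
    integral_prod_mixture_left pNeg (integrable_l01_comp hf _ _) (integrable_l01_comp hf _ _)
      hπ₀ hπ₁,
    integral_l01_prod_self hf pPos, integral_l01_prod_self hf pNeg]
  ring

theorem pn_pu_nu_decomposition {d : ℕ}
    (pPos pNeg : Measure (Fin d → ℝ))
    [IsProbabilityMeasure pPos] [IsProbabilityMeasure pNeg]
    (π : ℝ) (hπ : π ∈ Set.Ioo (0 : ℝ) 1)
    (f : (Fin d → ℝ) → ℝ) (hf : Measurable f)
    (hPN : (pPos.prod pNeg) {z | f z.1 = f z.2} = 0)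
    (hPP : (pPos.prod pPos) {z | f z.1 = f z.2} = 0)
    (hNN : (pNeg.prod pNeg) {z | f z.1 = f z.2} = 0)
    (pU : Measure (Fin d → ℝ))
    (hpU : pU = ENNReal.ofReal π • pPos + ENNReal.ofReal (1 - π) • pNeg) :
    ∫ z, l01 (f z.1) (f z.2) ∂(pPos.prod pNeg) =
      (∫ z, l01 (f z.1) (f z.2) ∂(pPos.prod pU)) +
      (∫ z, l01 (f z.1) (f z.2) ∂(pU.prod pNeg)) - 1 / 2 :=
  pn_pu_nu_decomposition_general pPos pNeg π hπ f hf pU hpU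
end

section
/- Fix λ > 0, θ > 0 with θλ ∈ (1,2), and step sizes η_i = θ/i. Define a_t^i = -η_i · ∏_{j=i+1}^{t} (1 - η_j λ) for 1 ≤ i ≤ t. Then |a_t^i| ≤ θ/t for all 1 ≤ i ≤ t. -/
/-- The DSG coefficients `a_t^i = -η_i ∏_{j=i+1}^t (1 - η_j λ)` with `η_i = θ/i`. -/
noncomputable def dsgCoeff (θ lam : ℝ) (t i : ℕ) : ℝ :=
  -(θ / i) * ∏ j ∈ Finset.Icc (i + 1) t, (1 - θ * lam / j)

theorem dsg_coeff_bound (θ lam : ℝ) (hθ : 0 < θ) (hlam : 0 < lam)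
    (h : θ * lam ∈ Set.Ioo (1 : ℝ) 2) (t : ℕ) (ht : 1 ≤ t) :
    ∀ i : ℕ, 1 ≤ i → i ≤ t → |dsgCoeff θ lam t i| ≤ θ / t := by
  intro i hi hit
  obtain ⟨h1, h2⟩ := h
  have key : ∀ s : ℕ, i ≤ s →
      0 ≤ ∏ j ∈ Finset.Icc (i + 1) s, (1 - θ * lam / j) ∧
      ∏ j ∈ Finset.Icc (i + 1) s, (1 - θ * lam / j) ≤ (i : ℝ) / s := by
    intro s
    induction s with
    | zero => intro h0; omega
    | succ n ih =>
      intro hin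
      have hpos : (0:ℝ) < (n:ℝ) + 1 := by positivity
      rcases Nat.lt_or_ge n i with hlt | hge
      · have heq : i = n + 1 := by omega
        subst heq
        rw [Finset.Icc_eq_empty (by omega)]
        simp [le_refl, div_self (ne_of_gt hpos)]
      · obtain ⟨hnn, hle⟩ := ih hge
        have hnpos : (0:ℝ) < (n:ℝ) := by exact_mod_cast by omega
        have hfnn : (0:ℝ) ≤ 1 - θ * lam / ((n:ℝ) + 1) := by
          have hn2 : (2:ℝ) ≤ (n:ℝ) + 1 := by exact_mod_cast by omega
          have : θ * lam / ((n:ℝ) + 1) ≤ 1 := by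
            rw [div_le_one hpos]; linarith
          linarith
        rw [Finset.prod_Icc_succ_top (by omega)]
        push_cast
        refine ⟨mul_nonneg hnn hfnn, ?_⟩
        have hfle : 1 - θ * lam / ((n:ℝ) + 1) ≤ (n:ℝ) / ((n:ℝ) + 1) := by
          rw [le_div_iff₀ hpos]
          have hm : θ * lam / ((n:ℝ) + 1) * ((n:ℝ) + 1) = θ * lam := by
            field_simp
          nlinarith
        calc (∏ j ∈ Finset.Icc (i + 1) n, (1 - θ * lam / (j:ℝ))) *
              (1 - θ * lam / ((n:ℝ) + 1))
            ≤ ((i:ℝ) / n) * ((n:ℝ) / ((n:ℝ) + 1)) :=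
              mul_le_mul hle hfle hfnn (by positivity)
          _ = (i:ℝ) / ((n:ℝ) + 1) := by field_simp
  obtain ⟨hnn, hle⟩ := key t hit
  have hipos : (0:ℝ) < (i:ℝ) := by exact_mod_cast hi
  have htpos : (0:ℝ) < (t:ℝ) := by exact_mod_cast ht
  rw [dsgCoeff, abs_mul, abs_neg, abs_of_nonneg (by positivity : (0:ℝ) ≤ θ / i),
    abs_of_nonneg hnn]
  calc θ / (i:ℝ) * ∏ j ∈ Finset.Icc (i + 1) t, (1 - θ * lam / (j:ℝ))
      ≤ θ / (i:ℝ) * ((i:ℝ) / t) := by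
        exact mul_le_mul_of_nonneg_left hle (by positivity)
    _ = θ / t := by field_simp
end

section
/- Fix λ > 0, θ > 0 with θλ a positive integer, step sizes η_i = θ/i, and a_t^i = -η_i · ∏_{j=i+1}^{t} (1 - η_j λ). Then |a_t^i| ≤ θ/t for all 1 ≤ i ≤ t, and moreover a_t^i = 0 whenever i ≤ θλ - 1. -/
open Finset

lemma prod_Icc_sub_one_div_self {i t : ℕ} (hi : 0 < i) (hit : i ≤ t) :
    ∏ j ∈ Icc (i + 1) t, (((j : ℝ) - 1) / j) = i / t := by
  induction t, hit using Nat.le_induction with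
  | base => simp [div_self (Nat.cast_ne_zero.2 hi.ne' : (i : ℝ) ≠ 0)]
  | succ n hin ih =>
    have hn : (n : ℝ) ≠ 0 := Nat.cast_ne_zero.2 (by omega)
    rw [prod_Icc_succ_top (by omega), ih]
    push_cast
    field_simp
    ring

lemma abs_prod_one_sub_div_le {c : ℝ} {i t : ℕ} (hc : 1 ≤ c) (hci : c ≤ i + 1) (hi : 0 < i)
    (hit : i ≤ t) : |∏ j ∈ Icc (i + 1) t, (1 - c / j)| ≤ i / t := by
  rw [abs_prod, ← prod_Icc_sub_one_div_self hi hit]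
  refine prod_le_prod (fun _ _ => abs_nonneg _) fun j hj => ?_
  have hcj : c ≤ j := hci.trans (by exact_mod_cast (mem_Icc.1 hj).1)
  have hj : (0 : ℝ) < j := by linarith
  rw [abs_of_nonneg (sub_nonneg.2 ((div_le_one hj).2 hcj)), sub_div, div_self hj.ne']
  gcongr

lemma abs_dsgCoeff_le {θ lam : ℝ} {i t : ℕ} (hθ : 0 ≤ θ) (hc : 1 ≤ θ * lam)
    (hci : θ * lam ≤ i + 1) (hi : 0 < i) (hit : i ≤ t) : |dsgCoeff θ lam t i| ≤ θ / t := by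
  have hi' : (i : ℝ) ≠ 0 := Nat.cast_ne_zero.2 hi.ne'
  rw [dsgCoeff, abs_mul, abs_neg, abs_of_nonneg (by positivity)]
  calc θ / i * |∏ j ∈ Icc (i + 1) t, (1 - θ * lam / j)| ≤ θ / i * (i / t) := by
        gcongr
        exact abs_prod_one_sub_div_le hc hci hi hit
    _ = θ / t := by field_simp

lemma dsgCoeff_eq_zero_of_lt {θ lam : ℝ} {m t i : ℕ} (hm : θ * lam = m) (him : i < m)
    (hmt : m ≤ t) : dsgCoeff θ lam t i = 0 := by
  have hm0 : (m : ℝ) ≠ 0 := Nat.cast_ne_zero.2 (by omega)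
  rw [dsgCoeff, prod_eq_zero (i := m) (mem_Icc.2 ⟨him, hmt⟩) (by rw [hm, div_self hm0, sub_self]),
    mul_zero]

theorem dsg_coeff_bound_int_case_general (θ lam : ℝ) (hθ : 0 < θ)
    (hint : ∃ m : ℕ, 0 < m ∧ θ * lam = m) (t : ℕ)
    (hmt : θ * lam ≤ t) :
    (∀ i : ℕ, 1 ≤ i → i ≤ t → |dsgCoeff θ lam t i| ≤ θ / t) ∧
    (∀ i : ℕ, 1 ≤ i → (i : ℝ) ≤ θ * lam - 1 → dsgCoeff θ lam t i = 0) := by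
  obtain ⟨m, hm0, hm⟩ := hint
  have hmt' : m ≤ t := by exact_mod_cast hm ▸ hmt
  refine ⟨fun i hi hit => ?_, fun i _ hil => dsgCoeff_eq_zero_of_lt hm ?_ hmt'⟩
  · rcases lt_or_ge i m with him | hmi
    · rw [dsgCoeff_eq_zero_of_lt hm him hmt', abs_zero]
      positivity
    · refine abs_dsgCoeff_le hθ.le ?_ ?_ hi hit <;> rw [hm]
      · exact_mod_cast hm0
      · exact_mod_cast hmi.trans i.le_succ
  · rw [hm] at hil
    exact_mod_cast (by linarith : (i : ℝ) + 1 ≤ m)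

theorem dsg_coeff_bound_int_case (θ lam : ℝ) (hθ : 0 < θ) (hlam : 0 < lam)
    (hint : ∃ m : ℕ, 0 < m ∧ θ * lam = m) (t : ℕ) (ht : 1 ≤ t)
    (hmt : θ * lam ≤ t) :
    (∀ i : ℕ, 1 ≤ i → i ≤ t → |dsgCoeff θ lam t i| ≤ θ / t) ∧
    (∀ i : ℕ, 1 ≤ i → (i : ℝ) ≤ θ * lam - 1 → dsgCoeff θ lam t i = 0) :=
  dsg_coeff_bound_int_case_general θ lam hθ hint t hmt
end
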